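/- arXiv:2407.16075 — 2 statements merged into one kernel-verified Lean document; each statement's English description precedes it below -/
import Mathlib

section
/- Let $x \in [0, \pi]$ and let $n_0 < n_1 < \dots < n_K$ be positive integers. Then $\sum_{j=1}^{K} \left| \int_{n_{j-1}x}^{n_j x} \frac{\sin t}{t}\,dt \right| \leq C(1 + \log K)$ for an absolute constant $C > 0$. -/
/-!
Each piece satisfies `|∫_a^b sin t / t dt| ≤ 4 min(b - a, 1) / (1 + a)`: the bound by the length
comes from `|sin t / t| ≤ 2 / (1 + t)`, the bound `4 / (1 + a)` from integrating by parts against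
`-cos` on `[max a 1, b]`. For the sum, a step starting at `a_j ≤ K - 1` is controlled by twice the
increment of `log (1 + min a K)`, which telescopes to at most `log (1 + K)`; each of the remaining
steps contributes less than `1 / K`.
-/

open Real MeasureTheory intervalIntegral Set Interval

lemma abs_sin_div_le_two_div_one_add {t : ℝ} (ht : 0 ≤ t) : |sin t / t| ≤ 2 / (1 + t) := by
  rcases ht.eq_or_lt with rfl | ht
  · norm_num
  rw [abs_div, abs_of_pos ht, div_le_div_iff₀ ht (by positivity)]
  nlinarith [abs_sin_le_one t, abs_sin_le_abs (x := t), abs_of_pos ht, abs_nonneg (sin t)]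

lemma intervalIntegrable_sin_div (a b : ℝ) :
    IntervalIntegrable (fun t => sin t / t) volume a b := by
  refine (continuous_sinc.intervalIntegrable a b).congr_ae (ae_restrict_of_ae ?_)
  filter_upwards [compl_mem_ae_iff.2 (measure_singleton (0 : ℝ))] with t ht
  exact sinc_of_ne_zero ht

lemma abs_integral_sin_div_le_mul {a b : ℝ} (ha : 0 ≤ a) (hab : a ≤ b) :
    |∫ t in a..b, sin t / t| ≤ 2 * (b - a) / (1 + a) := by
  have hbound : ∀ t ∈ Ι a b, ‖sin t / t‖ ≤ 2 / (1 + a) := by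
    intro t ht
    rw [uIoc_of_le hab] at ht
    calc ‖sin t / t‖ ≤ 2 / (1 + t) := abs_sin_div_le_two_div_one_add (ha.trans ht.1.le)
      _ ≤ 2 / (1 + a) := by gcongr; exact ht.1.le
  calc |∫ t in a..b, sin t / t| ≤ 2 / (1 + a) * |b - a| :=
        norm_integral_le_of_norm_le_const hbound
    _ = 2 * (b - a) / (1 + a) := by rw [abs_of_nonneg (sub_nonneg.2 hab)]; ring

lemma abs_integral_sin_div_le_of_one_le {a b : ℝ} (ha : 1 ≤ a) (hab : a ≤ b) :
    |∫ t in a..b, sin t / t| ≤ 2 / a := by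
  have hpos : ∀ t ∈ [[a, b]], 0 < t := fun t ht =>
    zero_lt_one.trans_le (ha.trans (by rw [uIcc_of_le hab] at ht; exact ht.1))
  have hu : ∀ t ∈ [[a, b]], HasDerivAt (·⁻¹) (-(t ^ 2)⁻¹) t := fun t ht =>
    hasDerivAt_inv (hpos t ht).ne'
  have hv : ∀ t ∈ [[a, b]], HasDerivAt (fun y => -cos y) (sin t) t := fun t _ => by
    rw [← neg_neg (sin t)]; exact (hasDerivAt_cos t).neg
  have hu' : IntervalIntegrable (fun t : ℝ => -(t ^ 2)⁻¹) volume a b :=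
    ContinuousOn.intervalIntegrable <| ((continuousOn_id.pow 2).inv₀ fun t ht =>
      pow_ne_zero 2 (hpos t ht).ne').neg
  have hle (t : ℝ) : ‖-(t ^ 2)⁻¹ * -cos t‖ ≤ -(-(t ^ 2)⁻¹) := by
    rw [neg_neg, norm_mul, norm_neg, norm_neg, norm_inv, norm_pow, Real.norm_eq_abs, sq_abs]
    exact mul_le_of_le_one_right (by positivity) (abs_cos_le_one t)
  have hrem : |∫ t in a..b, -(t ^ 2)⁻¹ * -cos t| ≤ a⁻¹ - b⁻¹ := by
    calc |∫ t in a..b, -(t ^ 2)⁻¹ * -cos t| ≤ ∫ t in a..b, -(-(t ^ 2)⁻¹) :=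
          intervalIntegral.norm_integral_le_of_norm_le hab
            (Filter.Eventually.of_forall fun t _ => hle t) hu'.neg
      _ = a⁻¹ - b⁻¹ := by
          rw [intervalIntegral.integral_neg, integral_eq_sub_of_hasDerivAt hu hu']; ring
  have hend : ∀ t ∈ [[a, b]], |t⁻¹ * -cos t| ≤ t⁻¹ := fun t ht => by
    rw [abs_mul, abs_neg, abs_of_pos (inv_pos.2 (hpos t ht))]
    exact mul_le_of_le_one_right (inv_pos.2 (hpos t ht)).le (abs_cos_le_one t)
  simp_rw [div_eq_inv_mul (sin _)]
  rw [integral_mul_deriv_eq_deriv_mul hu hv hu' (continuous_sin.intervalIntegrable a b)]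
  calc _ ≤ |b⁻¹ * -cos b| + |a⁻¹ * -cos a| + |∫ t in a..b, -(t ^ 2)⁻¹ * -cos t| :=
        (abs_sub _ _).trans (add_le_add_left (abs_sub _ _) _)
    _ ≤ 2 / a := by
        rw [div_eq_mul_inv]
        linarith [hend a left_mem_uIcc, hend b right_mem_uIcc]

lemma abs_integral_sin_div_le_four_div {a b : ℝ} (ha : 0 ≤ a) (hab : a ≤ b) :
    |∫ t in a..b, sin t / t| ≤ 4 / (1 + a) := by
  rcases le_or_gt 1 a with ha1 | ha1
  · calc |∫ t in a..b, sin t / t| ≤ 2 / a := abs_integral_sin_div_le_of_one_le ha1 hab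
      _ ≤ 4 / (1 + a) := by rw [div_le_div_iff₀ (by linarith) (by linarith)]; linarith
  rcases le_or_gt b 1 with hb1 | hb1
  · calc |∫ t in a..b, sin t / t| ≤ 2 * (b - a) / (1 + a) := abs_integral_sin_div_le_mul ha hab
      _ ≤ 4 / (1 + a) := by gcongr; linarith
  rw [← integral_add_adjacent_intervals (intervalIntegrable_sin_div a 1)
    (intervalIntegrable_sin_div 1 b)]
  calc _ ≤ |∫ t in a..1, sin t / t| + |∫ t in (1 : ℝ)..b, sin t / t| := abs_add_le _ _
    _ ≤ 2 * (1 - a) / (1 + a) + 2 / 1 :=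
        add_le_add (abs_integral_sin_div_le_mul ha ha1.le)
          (abs_integral_sin_div_le_of_one_le le_rfl hb1.le)
    _ = 4 / (1 + a) := by field_simp; ring

lemma abs_integral_sin_div_le {a b : ℝ} (ha : 0 ≤ a) (hab : a ≤ b) :
    |∫ t in a..b, sin t / t| ≤ 4 * min (b - a) 1 / (1 + a) := by
  rcases le_total (b - a) 1 with h | h
  · rw [min_eq_left h]
    calc |∫ t in a..b, sin t / t| ≤ 2 * (b - a) / (1 + a) := abs_integral_sin_div_le_mul ha hab
      _ ≤ 4 * (b - a) / (1 + a) := by gcongr; norm_num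
  · rw [min_eq_right h, mul_one]
    exact abs_integral_sin_div_le_four_div ha hab

lemma div_one_add_le_two_mul_log_sub {a d : ℝ} (ha : 0 ≤ a) (hd : 0 ≤ d) (hd1 : d ≤ 1) :
    d / (1 + a) ≤ 2 * (log (1 + a + d) - log (1 + a)) := by
  have hlog : d / (1 + a + d) ≤ log (1 + a + d) - log (1 + a) := by
    rw [← log_div (by positivity) (by positivity)]
    convert one_sub_inv_le_log_of_pos (x := (1 + a + d) / (1 + a)) (by positivity) using 1
    field_simp
    ring
  calc d / (1 + a) ≤ 2 * (d / (1 + a + d)) := by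
        rw [mul_div_assoc', div_le_div_iff₀ (by positivity) (by positivity)]; nlinarith
    _ ≤ _ := by gcongr

lemma min_sub_one_div_le_log_sub {a a' N : ℝ} (ha : 0 ≤ a) (haa' : a ≤ a') (hN : 0 < N) :
    min (a' - a) 1 / (1 + a) ≤ 2 * (log (1 + min a' N) - log (1 + min a N)) + 1 / N := by
  have hlog_mono : log (1 + min a N) ≤ log (1 + min a' N) := by gcongr
  rcases le_or_gt a (N - 1) with haN | haN
  · set d := min (a' - a) 1
    have hd : 0 ≤ d := le_min (sub_nonneg.2 haa') zero_le_one
    calc d / (1 + a) ≤ 2 * (log (1 + a + d) - log (1 + a)) :=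
          div_one_add_le_two_mul_log_sub ha hd (min_le_right _ _)
      _ ≤ 2 * (log (1 + min a' N) - log (1 + min a N)) := by
          rw [min_eq_left (by linarith : a ≤ N), add_assoc]
          gcongr
          exact le_min (by linarith [min_le_left (a' - a) 1])
            (by linarith [min_le_right (a' - a) 1])
      _ ≤ _ := le_add_of_nonneg_right (by positivity)
  · calc min (a' - a) 1 / (1 + a) ≤ 1 / N := by
          gcongr
          · exact min_le_right _ _
          · linarith
      _ ≤ _ := le_add_of_nonneg_left (by linarith)

lemma sum_min_sub_one_div_le {a : ℕ → ℝ} (ha : Monotone a) (ha0 : 0 ≤ a 0) {N : ℝ}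
    (hN : 0 < N) (K : ℕ) :
    ∑ j ∈ Finset.range K, min (a (j + 1) - a j) 1 / (1 + a j) ≤ 2 * log (1 + N) + K / N := by
  set g : ℕ → ℝ := fun j => log (1 + min (a j) N)
  calc ∑ j ∈ Finset.range K, min (a (j + 1) - a j) 1 / (1 + a j)
      ≤ ∑ j ∈ Finset.range K, (2 * (g (j + 1) - g j) + 1 / N) :=
        Finset.sum_le_sum fun j _ =>
          min_sub_one_div_le_log_sub (ha0.trans (ha j.zero_le)) (ha j.le_succ) hN
    _ = 2 * (g K - g 0) + K / N := by
        rw [Finset.sum_add_distrib, ← Finset.mul_sum, Finset.sum_range_sub]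
        simp [div_eq_mul_inv]
    _ ≤ 2 * log (1 + N) + K / N := by
        have hgK : g K ≤ log (1 + N) := by
          show log _ ≤ _
          gcongr
          · linarith [le_min (ha0.trans (ha K.zero_le)) hN.le]
          · exact min_le_right _ _
        have hg0 : 0 ≤ g 0 := log_nonneg (by linarith [le_min ha0 hN.le])
        linarith

lemma sum_abs_integral_sin_div_le {a : ℕ → ℝ} (ha : Monotone a) (ha0 : 0 ≤ a 0) {K : ℕ}
    (hK : 1 ≤ K) :
    ∑ j ∈ Finset.range K, |∫ t in a j..a (j + 1), sin t / t| ≤ 12 * (1 + log K) := by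
  have hK' : (0 : ℝ) < K := by exact_mod_cast hK
  have hlog : log (1 + K) ≤ 1 + log K := by
    calc log (1 + K) ≤ log (2 * K) := by gcongr; linarith [(Nat.one_le_cast (α := ℝ)).2 hK]
      _ = log 2 + log K := log_mul two_ne_zero hK'.ne'
      _ ≤ 1 + log K := by linarith [log_two_lt_d9]
  have hlogK : 0 ≤ log K := log_natCast_nonneg K
  calc ∑ j ∈ Finset.range K, |∫ t in a j..a (j + 1), sin t / t|
      ≤ ∑ j ∈ Finset.range K, 4 * (min (a (j + 1) - a j) 1 / (1 + a j)) :=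
        Finset.sum_le_sum fun j _ => by
          rw [mul_div_assoc']
          exact abs_integral_sin_div_le (ha0.trans (ha j.zero_le)) (ha j.le_succ)
    _ = 4 * ∑ j ∈ Finset.range K, min (a (j + 1) - a j) 1 / (1 + a j) :=
        (Finset.mul_sum _ _ _).symm
    _ ≤ 4 * (2 * log (1 + K) + K / K) := by gcongr; exact sum_min_sub_one_div_le ha ha0 hK' K
    _ ≤ 12 * (1 + log K) := by rw [div_self hK'.ne']; linarith

theorem sinc_telescoping_sum_bound :
    ∃ C : ℝ, 0 < C ∧ ∀ (x : ℝ), x ∈ Set.Icc 0 π → ∀ (K : ℕ), 1 ≤ K →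
      ∀ n : ℕ → ℕ, StrictMono n → (∀ j, 0 < n j) →
      ∑ j ∈ Finset.range K,
          |∫ t in ((n j : ℝ) * x)..((n (j + 1) : ℝ) * x), Real.sin t / t| ≤
        C * (1 + Real.log K) := by
  refine ⟨12, by norm_num, fun x hx K hK n hn _ => ?_⟩
  have hmono : Monotone fun j => (n j : ℝ) * x := fun i j hij =>
    mul_le_mul_of_nonneg_right (Nat.cast_le.2 (hn.monotone hij)) hx.1
  exact sum_abs_integral_sin_div_le hmono (mul_nonneg (Nat.cast_nonneg _) hx.1) hK
end

section
/- Let $c_1, \dots, c_{\tilde{K}}$ be real numbers with $|c_j| \leq 4M$ for all $j$, and suppose each nonzero $c_j$ satisfies $|c_j| \geq P^{-2}$. Let $\tilde{J}_1, \dots, \tilde{J}_{\tilde{K}}$ be disjoint intervals of positive integers, and set $h(t) = \sum_{j=1}^{\tilde{K}} c_j \sum_{n \in \tilde{J}_j} \cos(2\pi n t)$. Assuming the Littlewood $L^1$ lower bound $\|\sum a_j e(n_j t)\|_1 \geq c \sum_j |a_j|/j$, one has $\|h\|_{L^1[0,1]} \geq c' P^{-2} \log\frac{|h(0)|}{4M}$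 for an absolute constant $c' > 0$, whenever $|h(0)| > 4M$. -/
/-!
Group the frequencies of all blocks with nonzero coefficient into one set `T`; then
`h(t) = ∑_{m ∈ T} b_m cos(2π m t)` with `b_m = c_j` on the `j`-th block, so `P⁻² ≤ |b_m| ≤ 4M`.
Splitting each cosine as `(e(mt) + e(-mt))/2` turns `h` into an exponential sum with at least `|T|`
frequencies, all of whose coefficients have modulus at least `P⁻²/2`. Littlewood's bound then gives
`‖h‖₁ ≥ (c/2) P⁻² H_{|T|} ≥ (c/2) P⁻² log(|T| + 1)`, while `|h(0)| ≤ 4M |T|`.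
-/

open Real Finset Function

def LittlewoodBound (c : ℝ) : Prop :=
  ∀ (k : ℕ) (a : Fin k → ℂ) (n : Fin k → ℤ), StrictMono n →
    c * ∑ j : Fin k, ‖a j‖ / ((j : ℕ) + 1) ≤
      ∫ t in (0:ℝ)..1, ‖∑ j : Fin k, a j * Complex.exp (2 * Real.pi * Complex.I * (n j) * t)‖

lemma log_add_one_le_sum_inv (k : ℕ) :
    log ((k : ℝ) + 1) ≤ ∑ i : Fin k, 1 / ((i : ℕ) + 1 : ℝ) := by
  have h := log_add_one_le_harmonic k
  rw [Fin.sum_univ_eq_sum_range (fun i => 1 / ((i : ℕ) + 1 : ℝ))]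
  simp only [harmonic, Rat.cast_sum, Rat.cast_inv, Rat.cast_natCast] at h
  push_cast at h
  simpa only [one_div] using h

lemma LittlewoodBound.mul_log_le_integral {c : ℝ} (hL : LittlewoodBound c) (hc : 0 ≤ c)
    (s : Finset ℤ) (a : ℤ → ℂ) {δ : ℝ} (hδ₀ : 0 ≤ δ) (hδ : ∀ n ∈ s, δ ≤ ‖a n‖) :
    c * δ * log ((#s : ℝ) + 1) ≤
      ∫ t in (0:ℝ)..1, ‖∑ n ∈ s, a n * Complex.exp (2 * Real.pi * Complex.I * n * t)‖ := by
  set e := s.orderIsoOfFin rfl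
  have sum_comp_e : ∀ f : ℤ → ℂ, ∑ i, f (e i) = ∑ n ∈ s, f n := fun f =>
    (Equiv.sum_comp e.toEquiv fun n : s => f n).trans (sum_coe_sort s f)
  calc c * δ * log ((#s : ℝ) + 1)
      ≤ c * ∑ i : Fin #s, δ / ((i : ℕ) + 1) := by
        simp_rw [div_eq_mul_one_div δ, ← mul_sum, mul_assoc]
        gcongr
        exact log_add_one_le_sum_inv _
    _ ≤ c * ∑ i : Fin #s, ‖a (e i)‖ / ((i : ℕ) + 1) := by
        gcongr with i
        exact hδ _ (e i).2
    _ ≤ _ := hL _ _ _ fun i j hij => e.strictMono hij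
    _ = _ := intervalIntegral.integral_congr fun t _ => by
        simp only [sum_comp_e fun n => a n * Complex.exp (2 * Real.pi * Complex.I * n * t)]

lemma ofReal_mul_cos_eq_exp_add_exp (r t : ℝ) (m : ℤ) :
    ((r * cos (2 * π * m * t) : ℝ) : ℂ) =
      ((r / 2 : ℝ) : ℂ) * Complex.exp (2 * π * Complex.I * m * t) +
        ((r / 2 : ℝ) : ℂ) * Complex.exp (2 * π * Complex.I * ↑(-m) * t) := by
  have hx : 2 * π * Complex.I * m * t = ((2 * π * m * t : ℝ) : ℂ) * Complex.I := by
    push_cast; ring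
  have hy : 2 * π * Complex.I * ↑(-m) * t = -((2 * π * m * t : ℝ) : ℂ) * Complex.I := by
    push_cast; ring
  rw [hx, hy, Complex.exp_mul_I, Complex.exp_mul_I, Complex.cos_neg, Complex.sin_neg]
  push_cast
  ring

def Finset.plusMinus (T : Finset ℕ) : Finset ℤ :=
  T.image (fun m : ℕ => (m : ℤ)) ∪ T.image (fun m : ℕ => -(m : ℤ))

lemma Finset.natAbs_mem_of_mem_plusMinus {T : Finset ℕ} {n : ℤ} (hn : n ∈ T.plusMinus) :
    n.natAbs ∈ T := by
  rcases mem_union.mp hn with hn | hn <;>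
  · obtain ⟨m, hm, rfl⟩ := mem_image.mp hn
    simpa using hm

lemma Finset.card_le_card_plusMinus (T : Finset ℕ) : #T ≤ #T.plusMinus :=
  (card_image_of_injective _ Nat.cast_injective).ge.trans (card_le_card subset_union_left)

lemma ofReal_sum_mul_cos_eq_sum_exp {T : Finset ℕ} (hT : 0 ∉ T) (b : ℕ → ℝ) (t : ℝ) :
    ((∑ m ∈ T, b m * cos (2 * π * m * t) : ℝ) : ℂ) =
      ∑ n ∈ T.plusMinus, ((b n.natAbs / 2 : ℝ) : ℂ) * Complex.exp (2 * π * Complex.I * n * t) := by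
  have hdisj : Disjoint (T.image fun m : ℕ => (m : ℤ)) (T.image fun m : ℕ => -(m : ℤ)) := by
    refine disjoint_left.mpr ?_
    rintro _ hpos hneg
    obtain ⟨m, hm, rfl⟩ := mem_image.mp hpos
    obtain ⟨m', -, hm'm⟩ := mem_image.mp hneg
    have : m = 0 := by omega
    exact hT (this ▸ hm)
  rw [plusMinus, sum_union hdisj, sum_image fun _ _ _ _ h => Nat.cast_injective h,
    sum_image fun _ _ _ _ h => by simpa using h, ← sum_add_distrib]
  simp only [Int.natAbs_natCast, Int.natAbs_neg, Complex.ofReal_sum]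
  refine sum_congr rfl fun m _ => ?_
  exact_mod_cast ofReal_mul_cos_eq_exp_add_exp (b m) t m

lemma LittlewoodBound.mul_log_le_integral_abs_sum_cos {c : ℝ} (hL : LittlewoodBound c)
    (hc : 0 ≤ c) {T : Finset ℕ} (hT : 0 ∉ T) (b : ℕ → ℝ) {δ : ℝ} (hδ₀ : 0 ≤ δ)
    (hδ : ∀ m ∈ T, δ ≤ |b m|) :
    c * (δ / 2) * log ((#T : ℝ) + 1) ≤
      ∫ t in (0:ℝ)..1, |∑ m ∈ T, b m * cos (2 * π * m * t)| := by
  calc c * (δ / 2) * log ((#T : ℝ) + 1)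
      ≤ c * (δ / 2) * log ((#T.plusMinus : ℝ) + 1) := by
        gcongr
        exact_mod_cast T.card_le_card_plusMinus
    _ ≤ _ := hL.mul_log_le_integral hc _ (fun n => ((b n.natAbs / 2 : ℝ) : ℂ)) (by positivity)
        fun n hn => by
          rw [Complex.norm_real, norm_div, Real.norm_eq_abs, Real.norm_two]
          gcongr
          exact hδ _ (natAbs_mem_of_mem_plusMinus hn)
    _ = _ := intervalIntegral.integral_congr fun t _ => by
        simp only [← ofReal_sum_mul_cos_eq_sum_exp hT, Complex.norm_real, Real.norm_eq_abs]

namespace BlockSum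

variable {ι : Type*} [Fintype ι] (J : ι → Finset ℕ) (cc : ι → ℝ)

noncomputable def support : Finset ℕ := ({j | cc j ≠ 0} : Finset ι).biUnion J

def coeff (m : ℕ) : ℝ := ∑ i, if m ∈ J i then cc i else 0

variable {J cc}

lemma coeff_eq (hJ : Pairwise (Disjoint on J)) {j : ι} {m : ℕ} (hm : m ∈ J j) :
    coeff J cc m = cc j := by
  refine (sum_eq_single j (fun i _ hij => ?_) (by simp)).trans (if_pos hm)
  exact if_neg fun hmi => disjoint_left.mp (hJ hij) hmi hm

lemma exists_of_mem_support {m : ℕ} (hm : m ∈ support J cc) : ∃ j, cc j ≠ 0 ∧ m ∈ J j := by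
  simpa [support] using hm

lemma sum_mul_sum_eq (hJ : Pairwise (Disjoint on J)) (f : ℕ → ℝ) :
    ∑ j, cc j * ∑ m ∈ J j, f m = ∑ m ∈ support J cc, coeff J cc m * f m := by
  rw [support, sum_biUnion fun i _ j _ hij => hJ hij, sum_filter]
  refine sum_congr rfl fun j _ => ?_
  split_ifs with hj
  · rw [mul_sum]
    exact sum_congr rfl fun m hm => by rw [coeff_eq hJ hm]
  · simp [not_not.mp hj]

lemma abs_sum_mul_card_le (hJ : Pairwise (Disjoint on J)) {B : ℝ} (hB : ∀ j, |cc j| ≤ B) :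
    |∑ j, cc j * #(J j)| ≤ B * #(support J cc) := by
  have := sum_mul_sum_eq (cc := cc) hJ fun _ => 1
  simp only [sum_const, nsmul_eq_mul, mul_one] at this
  rw [this]
  calc |∑ m ∈ support J cc, coeff J cc m|
      ≤ ∑ m ∈ support J cc, |coeff J cc m| := abs_sum_le_sum_abs _ _
    _ ≤ ∑ m ∈ support J cc, B := sum_le_sum fun m hm => by
        obtain ⟨j, -, hmj⟩ := exists_of_mem_support hm
        simpa [coeff_eq hJ hmj] using hB j
    _ = B * #(support J cc) := by rw [sum_const, nsmul_eq_mul, mul_comm]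

end BlockSum

theorem L1_lower_bound_structured
    (c : ℝ) (hc : 0 < c)
    -- the Littlewood L¹ theorem, assumed as a hypothesis
    (hLitt : ∀ (k : ℕ) (a : Fin k → ℂ) (n : Fin k → ℤ), StrictMono n →
      c * ∑ j : Fin k, ‖a j‖ / ((j : ℕ) + 1) ≤
        ∫ t in (0:ℝ)..1, ‖∑ j : Fin k, a j * Complex.exp (2 * Real.pi * Complex.I * (n j) * t)‖) :
    ∃ c' : ℝ, 0 < c' ∧
      ∀ (M P : ℝ), 0 < M → 0 < P →
      ∀ (K : ℕ) (cc : Fin K → ℝ) (u v : Fin K → ℕ),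
        (∀ j, 0 < u j) → (∀ j, u j ≤ v j) →
        (∀ i j, i ≠ j → Disjoint (Finset.Icc (u i) (v i)) (Finset.Icc (u j) (v j))) →
        (∀ j, |cc j| ≤ 4 * M) →
        (∀ j, cc j ≠ 0 → 1 / P ^ 2 ≤ |cc j|) →
        4 * M < |∑ j : Fin K, cc j * ((Finset.Icc (u j) (v j)).card : ℝ)| →
        c' / P ^ 2 *
            Real.log (|∑ j : Fin K, cc j * ((Finset.Icc (u j) (v j)).card : ℝ)| / (4 * M)) ≤
          ∫ t in (0:ℝ)..1,
            |∑ j : Fin K, cc j * ∑ n ∈ Finset.Icc (u j) (v j), Real.cos (2 * Real.pi * n * t)| := by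
  refine ⟨c / 2, by positivity, ?_⟩
  intro M P hM hP K cc u v hu _ hdisj hbd hlow hbig
  set J : Fin K → Finset ℕ := fun j => Finset.Icc (u j) (v j)
  have hJ : Pairwise (Disjoint on J) := fun i j hij => hdisj i j hij
  set T := BlockSum.support J cc
  have hT : 0 ∉ T := fun h0 => by
    obtain ⟨j, -, hj⟩ := BlockSum.exists_of_mem_support h0
    exact (hu j).ne' (Nat.le_zero.mp (Finset.mem_Icc.mp hj).1)
  have hcoeff : ∀ m ∈ T, 1 / P ^ 2 ≤ |BlockSum.coeff J cc m| := fun m hm => by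
    obtain ⟨j, hj, hmj⟩ := BlockSum.exists_of_mem_support hm
    rw [BlockSum.coeff_eq hJ hmj]
    exact hlow j hj
  have hcard := BlockSum.abs_sum_mul_card_le hJ hbd
  calc c / 2 / P ^ 2 * log (|∑ j, cc j * (#(J j) : ℝ)| / (4 * M))
      ≤ c * (1 / P ^ 2 / 2) * log ((#T : ℝ) + 1) := by
        rw [show c / 2 / P ^ 2 = c * (1 / P ^ 2 / 2) by ring]
        gcongr
        · exact div_pos (by linarith) (by positivity)
        · rw [div_le_iff₀ (by positivity)]
          linarith
    _ ≤ ∫ t in (0:ℝ)..1, |∑ m ∈ T, BlockSum.coeff J cc m * cos (2 * π * m * t)| :=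
        LittlewoodBound.mul_log_le_integral_abs_sum_cos hLitt hc.le hT _ (by positivity) hcoeff
    _ = _ := intervalIntegral.integral_congr fun t _ =>
        congrArg abs (BlockSum.sum_mul_sum_eq hJ _).symm
end
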